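/- If (W,S) is a Coxeter system of type Λ and α is a reduced expression such that the braid graph B(α) is a tree, then B(α) is a path graph. -/

import Mathlib

open scoped Classical

namespace Braid

variable {B : Type*}

/-- A Coxeter matrix is *simply laced* if all of its entries are 1, 2 or 3
(in particular, no entry is `0`, which encodes `m(s,t) = ∞`). -/
def SimplyLaced (M : CoxeterMatrix B) : Prop := ∀ s t : B, 1 ≤ M s t ∧ M s t ≤ 3

/-- The Coxeter graph has an edge between `s` and `t` iff `m(s,t) ≥ 3`
(where the entry `0` encodes `∞`). -/
def CoxEdge (M : CoxeterMatrix B) (s t : B) : Prop := M s t = 0 ∨ 3 ≤ M s t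

/-- A Coxeter matrix is *triangle free* if its Coxeter graph contains no three-cycles. -/
def TriangleFree (M : CoxeterMatrix B) : Prop :=
  ∀ s t u : B, ¬ (CoxEdge M s t ∧ CoxEdge M t u ∧ CoxEdge M s u)

/-- A Coxeter system is of *type Λ* if it is simply laced and triangle free. -/
def TypeLambda (M : CoxeterMatrix B) : Prop := SimplyLaced M ∧ TriangleFree M

/-- `y` is obtained from `x` by replacing the factor `s t s` occupying the (0-based)
positions `p, p+1, p+2` by `t s t`, where `m(s,t) = 3`. -/
def BraidMoveAt (M : CoxeterMatrix B) (x y : List B) (p : ℕ) : Prop :=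
  ∃ s t : B, M s t = 3 ∧
    x = x.take p ++ [s, t, s] ++ x.drop (p + 3) ∧
    y = x.take p ++ [t, s, t] ++ x.drop (p + 3)

/-- `x` and `y` differ by a single braid move (applied to `x`). -/
def BraidMove (M : CoxeterMatrix B) (x y : List B) : Prop := ∃ p, BraidMoveAt M x y p

/-- Two words are *braid equivalent* if one is obtained from the other
by a sequence of braid moves. -/
def BraidEquiv (M : CoxeterMatrix B) : List B → List B → Prop :=
  Relation.ReflTransGen (BraidMove M)

/-- The braid class of `α`. -/
def braidClass (M : CoxeterMatrix B) (α : List B) : Set (List B) := {x | BraidEquiv M α x}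

/-- The braid graph of `α`: vertices are the members of the braid class of `α`, with two
vertices adjacent iff they differ by a single braid move. -/
def braidGraph (M : CoxeterMatrix B) (α : List B) : SimpleGraph (braidClass M α) :=
  SimpleGraph.fromRel (fun x y => BraidMove M x.1 y.1)

/-- `c` is the (1-based) center of a braid shadow of `β`; that is, the interval of 1-based
positions `⟦c-1, c+1⟧` is a braid shadow of `β`. -/
def ShadowCenter (M : CoxeterMatrix B) (β : List B) (c : ℕ) : Prop :=
  2 ≤ c ∧ ∃ s t : B, M s t = 3 ∧ β = β.take (c - 2) ++ [s, t, s] ++ β.drop (c + 1)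

/-- The set of (1-based) centers of the braid shadows of the braid class `[α]`. -/
def classCenters (M : CoxeterMatrix B) (α : List B) : Set ℕ :=
  {c | ∃ β ∈ braidClass M α, ShadowCenter M β c}

/-- The dimension of `α`: the number of braid shadows of `[α]`. -/
noncomputable def braidDim (M : CoxeterMatrix B) (α : List B) : ℕ :=
  (classCenters M α).ncard

/-- The (1-based) center of the `i`-th braid shadow of `[α]`, the braid shadows being
numbered `1, …, braidDim M α` from left to right. -/
noncomputable def nthCenter (M : CoxeterMatrix B) (α : List B) (i : ℕ) : ℕ :=
  Nat.nth (· ∈ classCenters M α) (i - 1)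

/-- The `i`-th entry of the signature of `x ∈ [α]`: the letter of `x` appearing in the
center of the `i`-th braid shadow of `[α]`. -/
noncomputable def sig (M : CoxeterMatrix B) (α x : List B) (i : ℕ) : Option B :=
  x[nthCenter M α i - 1]?

/-- `sigbar M α x i` is the set of members of `[α]` whose signature agrees with that of `x`
in position `i`. -/
noncomputable def sigbar (M : CoxeterMatrix B) (α x : List B) (i : ℕ) :
    Set (braidClass M α) :=
  {y | sig M α y.1 i = sig M α x i}

/-- `x` and `y` differ by a single braid move occurring in the `j`-th braid shadow
of `[α]` (i.e. the edge `{x,y}` of the braid graph is labeled by `j`). -/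
noncomputable def EdgeLabeled (M : CoxeterMatrix B) (α x y : List B) (j : ℕ) : Prop :=
  1 ≤ j ∧ j ≤ braidDim M α ∧
    (BraidMoveAt M x y (nthCenter M α j - 2) ∨ BraidMoveAt M y x (nthCenter M α j - 2))

/-- `x` and `y` differ by a single braid move occurring in the braid shadow with
(1-based) center `c`. -/
def MoveAtCenter (M : CoxeterMatrix B) (x y : List B) (c : ℕ) : Prop :=
  BraidMoveAt M x y (c - 2) ∨ BraidMoveAt M y x (c - 2)

/-- `BraidSeq M α js x y` : the list `js` of braid-shadow numbers records a braid sequence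
transforming `x` into `y`, each move being applied in the indicated braid shadow of `[α]`. -/
noncomputable def BraidSeq (M : CoxeterMatrix B) (α : List B) :
    List ℕ → List B → List B → Prop
  | [], x, y => x = y
  | j :: js, x, y => ∃ z, EdgeLabeled M α x z j ∧ BraidSeq M α js z y

/-- A braid sequence from `x` to `y` is *minimal* if no shorter braid sequence from `x`
to `y` exists. -/
noncomputable def MinimalBraidSeq (M : CoxeterMatrix B) (α : List B)
    (js : List ℕ) (x y : List B) : Prop :=
  BraidSeq M α js x y ∧ ∀ ls : List ℕ, BraidSeq M α ls x y → js.length ≤ ls.length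

/-- `Δ(sig(α), sig(β))`: the number of positions at which the signatures of `α` and `β`
differ. -/
noncomputable def sigDelta (M : CoxeterMatrix B) (α β : List B) : ℕ :=
  {i | 1 ≤ i ∧ i ≤ braidDim M α ∧ sig M α α i ≠ sig M α β i}.ncard

/-- A reduced expression is a *link* if it has length 1, or it has odd length `m` and the
braid shadows of its braid class are exactly `⟦1,3⟧, ⟦3,5⟧, …, ⟦m-2,m⟧`
(equivalently, the shadow centers are exactly the even numbers `2, 4, …, m-1`). -/
def IsLink (M : CoxeterMatrix B) (α : List B) : Prop :=
  1 ≤ α.length ∧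
    (α.length = 1 ∨ (Odd α.length ∧
      classCenters M α = {c | Even c ∧ 2 ≤ c ∧ c + 1 ≤ α.length}))

/-- `maj M α β γ i`: the majority among the `i`-th signature entries of `α`, `β`, `γ`. -/
noncomputable def maj (M : CoxeterMatrix B) (α β γ : List B) (i : ℕ) : Option B :=
  if sig M α α i = sig M α β i ∨ sig M α α i = sig M α γ i then sig M α α i
  else sig M α β i

/-- `sigbarPair M α x y`: the set of members of `[α]` whose signature agrees with the
common signature entries of `x` and `y`. -/
noncomputable def sigbarPair (M : CoxeterMatrix B) (α x y : List B) :
    Set (braidClass M α) :=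
  {z | ∀ i : ℕ, 1 ≤ i → i ≤ braidDim M α →
    sig M α x i = sig M α y i → sig M α z.1 i = sig M α x i}

/-! ### Graph-theoretic notions -/

/-- A set `U` of vertices of a graph is *convex* if every vertex on every geodesic
(shortest path) between two vertices of `U` belongs to `U`. -/
def GraphConvex {V : Type*} (G : SimpleGraph V) (U : Set V) : Prop :=
  ∀ u ∈ U, ∀ v ∈ U, ∀ p : G.Walk u v, p.length = G.dist u v → ∀ x ∈ p.support, x ∈ U

/-- The interval `I(u,v)`: the set of vertices lying on some geodesic between `u` and `v`. -/
def interval {V : Type*} (G : SimpleGraph V) (u v : V) : Set V :=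
  {x | ∃ p : G.Walk u v, p.length = G.dist u v ∧ x ∈ p.support}

/-- A connected graph is *median* if any three vertices admit a unique median. -/
def IsMedianGraph {V : Type*} (G : SimpleGraph V) : Prop :=
  G.Connected ∧ ∀ u v w : V,
    ∃! x, x ∈ interval G u v ∩ interval G u w ∩ interval G v w

/-- The hypercube of dimension `n`: vertices are binary strings of length `n`, adjacent
iff they differ in exactly one digit. -/
def hypercube (n : ℕ) : SimpleGraph (Fin n → Bool) :=
  SimpleGraph.fromRel (fun x y => ∃! i, x i ≠ y i)

/-- A graph is a *partial cube* if it admits an isometric embedding into some hypercube. -/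
def IsPartialCube {V : Type*} (G : SimpleGraph V) : Prop :=
  ∃ (n : ℕ) (f : V → Fin n → Bool),
    ∀ u v : V, (hypercube n).dist (f u) (f v) = G.dist u v

/-- The isometric dimension of a graph: the minimal dimension of a hypercube into which it
isometrically embeds. -/
noncomputable def isoDim {V : Type*} (G : SimpleGraph V) : ℕ :=
  sInf {n | ∃ f : V → Fin n → Bool,
    ∀ u v : V, (hypercube n).dist (f u) (f v) = G.dist u v}

/-- The semicube `W_{uv}` : the set of vertices strictly closer to `u` than to `v`. -/
def semicube {V : Type*} (G : SimpleGraph V) (u v : V) : Set V :=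
  {w | G.dist w u < G.dist w v}

end Braid

/-!
Two braid moves out of a reduced word `x` act at positions `p < q`. If `q = p + 1`, then `x`
contains `s t s t` with `m(s,t) = 3`, so it is not reduced; if `q ≥ p + 3`, the two moves commute
and close a 4-cycle in the braid graph. Hence in a braid tree the moves out of any vertex act at
positions pairwise two apart, so every vertex has degree at most two. A finite tree of maximum
degree two is a path: distance from a leaf numbers its vertices.
-/

namespace SimpleGraph

variable {V : Type*} {G : SimpleGraph V}

lemma Connected.exists_adj_dist_eq_of_dist_eq_add_one (hG : G.Connected) {u v : V} {d : ℕ}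
    (h : G.dist u v = d + 1) : ∃ b, G.Adj b v ∧ G.dist u b = d := by
  obtain ⟨p, -, hp⟩ := hG.exists_path_of_dist u v
  have hnil : ¬ p.Nil := by simp [← Walk.length_eq_zero_iff, hp, h]
  have hb : G.Adj p.penultimate v := p.adj_penultimate hnil
  have hle : G.dist u p.penultimate ≤ d := by
    simpa [Walk.length_dropLast, hp, h] using dist_le p.dropLast
  refine ⟨p.penultimate, hb, ?_⟩
  rcases hb.diff_dist_adj (u := u) with h' | h' | h' <;> omega

lemma IsAcyclic.eq_of_adj_of_adj (hG : G.IsAcyclic) {x y z w : V} (hxy : G.Adj x y)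
    (hyw : G.Adj y w) (hxz : G.Adj x z) (hzw : G.Adj z w) (hyz : y ≠ z) : x = w := by
  by_contra hxw
  have := (hG.subsingleton_path x w).elim
    ⟨.cons hxy (.cons hyw .nil), by simp [hxy.ne, hyw.ne, hxw]⟩
    ⟨.cons hxz (.cons hzw .nil), by simp [hxz.ne, hzw.ne, hxw]⟩
  exact hyz (by simpa using congrArg (fun p => p.1.support) this)

variable [Fintype V] [DecidableRel G.Adj]

lemma one_lt_degree_of_adj {v a b : V} (ha : G.Adj v a) (hb : G.Adj v b) (hab : a ≠ b) :
    1 < G.degree v :=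
  Finset.one_lt_card.2 ⟨a, by simpa, b, by simpa, hab⟩

lemma two_lt_degree_of_adj {v a b c : V} (ha : G.Adj v a) (hb : G.Adj v b) (hc : G.Adj v c)
    (hab : a ≠ b) (hac : a ≠ c) (hbc : b ≠ c) : 2 < G.degree v :=
  Finset.two_lt_card.2 ⟨a, by simpa, b, by simpa, c, by simpa, hab, hac, hbc⟩

lemma IsTree.exists_degree_le_one (hG : G.IsTree) : ∃ u, G.degree u ≤ 1 := by
  cases subsingleton_or_nontrivial V
  · obtain ⟨u⟩ := hG.connected.nonempty
    exact ⟨u, by simp [degree]⟩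
  · obtain ⟨u, hu⟩ := hG.exists_vert_degree_one_of_nontrivial
    exact ⟨u, hu.le⟩

lemma Connected.dist_injective_of_degree_le_two (hG : G.Connected) {u : V}
    (hu : G.degree u ≤ 1) (hdeg : ∀ v, G.degree v ≤ 2) : Function.Injective (G.dist u) := by
  suffices ∀ d v w, G.dist u v = d → G.dist u w = d → v = w from
    fun v w h => this _ v w rfl h.symm
  intro d
  induction d with
  | zero =>
    intro v w hv hw
    exact (hG.dist_eq_zero_iff.1 hv).symm.trans (hG.dist_eq_zero_iff.1 hw)
  | succ d ih =>
    intro v w hv hw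
    obtain ⟨b, hbv, hb⟩ := hG.exists_adj_dist_eq_of_dist_eq_add_one hv
    obtain ⟨c, hcw, hc⟩ := hG.exists_adj_dist_eq_of_dist_eq_add_one hw
    obtain rfl := ih b c hb hc
    by_contra hvw
    cases d with
    | zero =>
      obtain rfl := hG.dist_eq_zero_iff.1 hb
      have := one_lt_degree_of_adj hbv hcw hvw
      omega
    | succ d =>
      obtain ⟨a, hab, ha⟩ := hG.exists_adj_dist_eq_of_dist_eq_add_one hb
      have := two_lt_degree_of_adj hbv hcw hab.symm hvw (by rintro rfl; omega)
        (by rintro rfl; omega)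
      have := hdeg b
      omega

theorem IsTree.nonempty_iso_pathGraph_of_degree_le_two (hG : G.IsTree)
    (hdeg : ∀ v, G.degree v ≤ 2) : Nonempty (G ≃g pathGraph (Fintype.card V)) := by
  obtain ⟨u, hu⟩ := hG.exists_degree_le_one
  have hinj := hG.connected.dist_injective_of_degree_le_two hu hdeg
  have hlt : ∀ v, G.dist u v < Fintype.card V := fun v => by
    obtain ⟨p, hp, hlen⟩ := hG.connected.exists_path_of_dist u v
    exact hlen ▸ hp.length_lt
  let f : V → Fin (Fintype.card V) := fun v => ⟨G.dist u v, hlt v⟩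
  have hf : Function.Bijective f := (Fintype.bijective_iff_injective_and_card f).2
    ⟨fun v w h => hinj (Fin.mk.inj_iff.1 h), (Fintype.card_fin _).symm⟩
  have adj_of_dist : ∀ v w, G.dist u v + 1 = G.dist u w → G.Adj v w := fun v w h => by
    obtain ⟨b, hbw, hb⟩ := hG.connected.exists_adj_dist_eq_of_dist_eq_add_one h.symm
    exact hinj hb ▸ hbw
  refine ⟨⟨Equiv.ofBijective f hf, fun {v w} => ?_⟩⟩
  simp only [Equiv.ofBijective_apply, pathGraph_adj, f]
  refine ⟨?_, fun h => (hG.dist_eq_dist_add_one_of_adj u h).symm.imp Eq.symm Eq.symm⟩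
  rintro (h | h)
  exacts [adj_of_dist v w h, (adj_of_dist w v h).symm]

end SimpleGraph

lemma List.finite_length_eq_forall_mem {α : Type*} {S : Set α} (hS : S.Finite) (n : ℕ) :
    {l : List α | l.length = n ∧ ∀ a ∈ l, a ∈ S}.Finite := by
  have := hS.to_subtype
  refine ((List.finite_length_eq S n).image (List.map (↑))).subset ?_
  rintro l ⟨hn, hl⟩
  exact ⟨l.attachWith _ hl, by simp [hn], by simp⟩

namespace Braid

variable {B : Type*} {M : CoxeterMatrix B}

lemma ne_of_eq_three {s t : B} (h3 : M s t = 3) : s ≠ t := by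
  rintro rfl
  simp at h3

lemma braidMoveAt_iff {x y : List B} {p : ℕ} :
    BraidMoveAt M x y p ↔ ∃ (s t : B) (l r : List B), M s t = 3 ∧ l.length = p ∧
      x = l ++ [s, t, s] ++ r ∧ y = l ++ [t, s, t] ++ r := by
  constructor
  · rintro ⟨s, t, h3, hx, hy⟩
    refine ⟨s, t, x.take p, x.drop (p + 3), h3, ?_, hx, hy⟩
    have := congrArg List.length hx
    simp only [List.length_append, List.length_take, List.length_drop, List.length_cons,
      List.length_nil] at this ⊢
    omega
  · rintro ⟨s, t, l, r, h3, rfl, rfl, rfl⟩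
    refine ⟨s, t, h3, ?_, ?_⟩ <;> simp [List.drop_append]

namespace BraidMoveAt

variable {x y z : List B} {p : ℕ}

lemma symm (h : BraidMoveAt M x y p) : BraidMoveAt M y x p := by
  obtain ⟨s, t, l, r, h3, hl, rfl, rfl⟩ := braidMoveAt_iff.1 h
  exact braidMoveAt_iff.2 ⟨t, s, l, r, M.symmetric s t ▸ h3, hl, rfl, rfl⟩

lemma right_unique (h1 : BraidMoveAt M x y p) (h2 : BraidMoveAt M x z p) : y = z := by
  obtain ⟨s, t, l, r, -, rfl, rfl, rfl⟩ := braidMoveAt_iff.1 h1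
  obtain ⟨s', t', l', r', -, hl, hx, rfl⟩ := braidMoveAt_iff.1 h2
  obtain ⟨rfl, h⟩ := List.append_inj (by simpa using hx) hl.symm
  simp only [List.cons.injEq] at h
  obtain ⟨rfl, rfl, -, rfl⟩ := h
  rfl

lemma ne (h : BraidMoveAt M x y p) : x ≠ y := by
  obtain ⟨s, t, l, r, h3, -, rfl, rfl⟩ := braidMoveAt_iff.1 h
  simp [ne_of_eq_three h3]

lemma length_eq (h : BraidMoveAt M x y p) : y.length = x.length := by
  obtain ⟨s, t, l, r, -, -, rfl, rfl⟩ := braidMoveAt_iff.1 h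
  simp

lemma mem_of_mem (h : BraidMoveAt M x y p) {a : B} (ha : a ∈ y) : a ∈ x := by
  obtain ⟨s, t, l, r, -, -, rfl, rfl⟩ := braidMoveAt_iff.1 h
  simp only [List.mem_append, List.mem_cons, List.not_mem_nil, or_false] at ha ⊢
  tauto

lemma exists_commute {q : ℕ} (h1 : BraidMoveAt M x y p) (h2 : BraidMoveAt M x z q)
    (hpq : p + 3 ≤ q) :
    ∃ w, BraidMoveAt M y w q ∧ BraidMoveAt M z w p ∧ y ≠ z ∧ x ≠ w := by
  obtain ⟨s, t, l, r, h3, rfl, rfl, rfl⟩ := braidMoveAt_iff.1 h1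
  obtain ⟨s', t', l', r', h3', rfl, hx, rfl⟩ := braidMoveAt_iff.1 h2
  have hl' : l' <+: l ++ [s, t, s] ++ r := hx ▸ ⟨[s', t', s'] ++ r', by simp⟩
  obtain ⟨c, rfl⟩ := List.prefix_of_prefix_length_le (List.prefix_append _ r) hl'
    (by simpa using hpq)
  obtain rfl : r = c ++ [s', t', s'] ++ r' := by simpa using hx
  have hst := ne_of_eq_three h3
  refine ⟨l ++ [t, s, t] ++ c ++ [t', s', t'] ++ r',
    braidMoveAt_iff.2 ⟨s', t', l ++ [t, s, t] ++ c, r', h3', by simp, by simp, rfl⟩,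
    braidMoveAt_iff.2 ⟨s, t, l, c ++ [t', s', t'] ++ r', h3, rfl, by simp, by simp⟩,
    by simp [hst], by simp [hst]⟩

end BraidMoveAt

namespace BraidEquiv

variable {α x : List B}

lemma length_eq (h : BraidEquiv M α x) : x.length = α.length := by
  induction h with
  | refl => rfl
  | tail _ hm ih => obtain ⟨p, hp⟩ := hm; rw [hp.length_eq, ih]

lemma mem_of_mem (h : BraidEquiv M α x) {a : B} (ha : a ∈ x) : a ∈ α := by
  induction h with
  | refl => exact ha
  | tail _ hm ih => obtain ⟨p, hp⟩ := hm; exact ih (hp.mem_of_mem ha)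

end BraidEquiv

lemma braidClass_finite (α : List B) : (braidClass M α).Finite :=
  (List.finite_length_eq_forall_mem α.finite_toSet α.length).subset
    fun _ hx => ⟨BraidEquiv.length_eq hx, fun _ => BraidEquiv.mem_of_mem hx⟩

section Coxeter

variable {W : Type*} [Group W] (cs : CoxeterSystem M W)

lemma wordProd_sts_eq {s t : B} (h3 : M s t = 3) :
    cs.wordProd [s, t, s] = cs.wordProd [t, s, t] := by
  have := cs.wordProd_braidWord_eq t s
  rwa [CoxeterSystem.braidWord, CoxeterSystem.braidWord, M.symmetric t s, h3] at this

lemma not_isReduced_append_stst {s t : B} (h3 : M s t = 3) (l r : List B) :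
    ¬ cs.IsReduced (l ++ [s, t, s, t] ++ r) := by
  intro h
  have := (h.drop l.length).take 4
  refine cs.not_isReduced_alternatingWord s t (m := 4) (by omega) (by omega) ?_
  simpa [CoxeterSystem.alternatingWord] using this

lemma BraidMoveAt.wordProd_eq {x y : List B} {p : ℕ} (h : BraidMoveAt M x y p) :
    cs.wordProd y = cs.wordProd x := by
  obtain ⟨s, t, l, r, h3, -, rfl, rfl⟩ := braidMoveAt_iff.1 h
  simp only [cs.wordProd_append, wordProd_sts_eq cs h3]

lemma BraidMoveAt.not_isReduced_of_succ {x y z : List B} {p : ℕ} (h1 : BraidMoveAt M x y p)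
    (h2 : BraidMoveAt M x z (p + 1)) : ¬ cs.IsReduced x := by
  obtain ⟨s, t, l, r, h3, rfl, rfl, -⟩ := braidMoveAt_iff.1 h1
  obtain ⟨s', t', l', r', -, hl, hx, -⟩ := braidMoveAt_iff.1 h2
  obtain ⟨-, h⟩ :=
    List.append_inj (s₁ := l ++ [s]) (by simpa using hx) (by simpa using hl.symm)
  simp only [List.cons.injEq] at h
  obtain ⟨rfl, rfl, rfl⟩ := h
  simpa using not_isReduced_append_stst cs h3 l r'

lemma BraidEquiv.wordProd_eq {α x : List B} (h : BraidEquiv M α x) :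
    cs.wordProd x = cs.wordProd α := by
  induction h with
  | refl => rfl
  | tail _ hm ih => obtain ⟨p, hp⟩ := hm; rw [hp.wordProd_eq cs, ih]

variable {cs} in
lemma BraidEquiv.isReduced {α x : List B} (hα : cs.IsReduced α) (h : BraidEquiv M α x) :
    cs.IsReduced x := by
  rw [CoxeterSystem.IsReduced, h.wordProd_eq cs, h.length_eq, hα]

end Coxeter

lemma braidGraph_adj {α : List B} {x y : braidClass M α} :
    (braidGraph M α).Adj x y ↔ BraidMove M x.1 y.1 := by
  rw [braidGraph, SimpleGraph.fromRel_adj]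
  constructor
  · rintro ⟨-, h | ⟨p, hp⟩⟩
    exacts [h, ⟨p, hp.symm⟩]
  · rintro ⟨p, hp⟩
    exact ⟨ne_of_apply_ne Subtype.val hp.ne, Or.inl ⟨p, hp⟩⟩

section BraidGraph

variable {W : Type*} [Group W] {cs : CoxeterSystem M W} {α : List B}

lemma eq_add_two_of_braidMoveAt (hα : cs.IsReduced α) (hG : (braidGraph M α).IsAcyclic)
    {x y z : braidClass M α} {p q : ℕ} (h1 : BraidMoveAt M x.1 y.1 p)
    (h2 : BraidMoveAt M x.1 z.1 q) (hpq : p < q) : q = p + 2 := by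
  obtain rfl | rfl | hq : q = p + 1 ∨ q = p + 2 ∨ p + 3 ≤ q := by omega
  · exact absurd (x.2.isReduced hα) (h1.not_isReduced_of_succ cs h2)
  · rfl
  · obtain ⟨w, hyw, hzw, hyz, hxw⟩ := h1.exists_commute h2 hq
    let w' : braidClass M α := ⟨w, Relation.ReflTransGen.tail y.2 ⟨q, hyw⟩⟩
    have hyw' : (braidGraph M α).Adj y w' := braidGraph_adj.2 ⟨q, hyw⟩
    have hzw' : (braidGraph M α).Adj z w' := braidGraph_adj.2 ⟨p, hzw⟩
    exact absurd (hG.eq_of_adj_of_adj (braidGraph_adj.2 ⟨p, h1⟩) hyw'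
      (braidGraph_adj.2 ⟨q, h2⟩) hzw' (ne_of_apply_ne Subtype.val hyz))
      (ne_of_apply_ne Subtype.val hxw)

lemma braidGraph_degree_le_two (hα : cs.IsReduced α) (hG : (braidGraph M α).IsAcyclic)
    (x : braidClass M α) [Fintype ((braidGraph M α).neighborSet x)] :
    (braidGraph M α).degree x ≤ 2 := by
  have apart {y z : braidClass M α} {p q : ℕ} (h1 : BraidMoveAt M x.1 y.1 p)
      (h2 : BraidMoveAt M x.1 z.1 q) (hyz : y ≠ z) : q = p + 2 ∨ p = q + 2 := by
    rcases lt_trichotomy p q with h | rfl | h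
    · exact .inl (eq_add_two_of_braidMoveAt hα hG h1 h2 h)
    · exact absurd (Subtype.ext (h1.right_unique h2)) hyz
    · exact .inr (eq_add_two_of_braidMoveAt hα hG h2 h1 h)
  by_contra! h
  obtain ⟨a, ha, b, hb, c, hc, hab, hac, hbc⟩ := Finset.two_lt_card.1 h
  obtain ⟨pa, ha⟩ := braidGraph_adj.1 ((braidGraph M α).mem_neighborFinset x a |>.1 ha)
  obtain ⟨pb, hb⟩ := braidGraph_adj.1 ((braidGraph M α).mem_neighborFinset x b |>.1 hb)
  obtain ⟨pc, hc⟩ := braidGraph_adj.1 ((braidGraph M α).mem_neighborFinset x c |>.1 hc)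
  have := apart ha hb hab
  have := apart ha hc hac
  have := apart hb hc hbc
  omega

end BraidGraph

theorem braidGraph_tree_is_path_general
    {B W : Type*} [Group W] (M : CoxeterMatrix B) (cs : CoxeterSystem M W)
    (α : List B) (hα : cs.IsReduced α)
    (htree : (braidGraph M α).IsTree) :
    ∃ n : ℕ, Nonempty (braidGraph M α ≃g SimpleGraph.pathGraph n) := by
  have := (braidClass_finite (M := M) α).fintype
  exact ⟨_, htree.nonempty_iso_pathGraph_of_degree_le_two
    fun x => braidGraph_degree_le_two hα htree.isAcyclic x⟩

theorem braidGraph_tree_is_path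
    {B W : Type*} [Group W] (M : CoxeterMatrix B) (cs : CoxeterSystem M W)
    (hM : TypeLambda M) (α : List B) (hα : cs.IsReduced α)
    (htree : (braidGraph M α).IsTree) :
    ∃ n : ℕ, Nonempty (braidGraph M α ≃g SimpleGraph.pathGraph n) :=
  braidGraph_tree_is_path_general M cs α hα htree

end Braid
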